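/- arXiv:1008.3310 — 2 statements merged into one kernel-verified Lean document; each statement's English description precedes it below -/
import Mathlib

section
/- Let P be a finite nonempty partially ordered set, let w : P → ℝ be an injective weight function, and let x be a maximal element of P. Then x is the greedy maximum of (P, w) if and only if x is the greedy maximum of the induced partial order on {y ∈ P : w(y) ≤ w(x)} with the restricted weights. -/
open MeasureTheory Finset Function
open scoped Classical ENNReal

/-- The element of the finset `s` with minimum weight. -/
noncomputable def argminOn {α : Type*} (w : α → ℝ) (s : Finset α) (h : s.Nonempty) : α :=
  (s.exists_min_image w h).choose

/-- One step of the greedy chain: if `x` is not maximal, move to the element of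
minimum weight among those strictly above `x`; otherwise stay at `x`. -/
noncomputable def greedyStep {α : Type*} [PartialOrder α] [Fintype α] (w : α → ℝ) (x : α) : α :=
  if h : (Finset.univ.filter fun y => x < y).Nonempty then argminOn w _ h else x

/-- The greedy maximum of a finite nonempty partially ordered set with weights `w`:
start at the element of minimum weight and iterate `greedyStep` until stabilization
(`Fintype.card α` iterations suffice). -/
noncomputable def greedyMax {α : Type*} [PartialOrder α] [Fintype α] [Nonempty α]
    (w : α → ℝ) : α :=
  (greedyStep w)^[Fintype.card α] (argminOn w Finset.univ Finset.univ_nonempty)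

/-- `x` belongs to `s` and is the greedy maximum of the partial order induced on `s`,
with the weights `w` restricted to `s`. -/
def IsGreedyMaxOn {α : Type*} [PartialOrder α] [Fintype α]
    (w : α → ℝ) (s : Set α) (x : α) : Prop :=
  ∃ hx : x ∈ s,
    haveI : Nonempty s := ⟨⟨x, hx⟩⟩
    greedyMax (fun y : s => w y.1) = ⟨x, hx⟩

/-- `x` is *tagged*: it is the greedy maximum (w.r.t. the weights `w`) of the induced
partial order on the set of elements arriving no later than `x`. -/
def Tagged {α : Type*} [PartialOrder α] [Fintype α] (T w : α → ℝ) (x : α) : Prop :=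
  IsGreedyMaxOn w {y | T y ≤ T x} x

/-- The strategy accepts `x`: `x` is tagged, arrives after time `1/e`, and no other
element is tagged with arrival time in `(1/e, T x)`. -/
def Accepts {α : Type*} [PartialOrder α] [Fintype α] (T w : α → ℝ) (x : α) : Prop :=
  Tagged T w x ∧ 1 / Real.exp 1 < T x ∧
    ∀ y, Tagged T w y → 1 / Real.exp 1 < T y → T x ≤ T y

/-- The probability that `x` is the greedy maximum of `P` when the weights are
independent and uniform on `[0,1]`. -/
noncomputable def muGreedy (P : Type) [Fintype P] [PartialOrder P] (x : P) : ℝ≥0∞ :=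
  (Measure.pi fun _ : P => volume.restrict (Set.Icc (0:ℝ) 1)) {w | IsGreedyMaxOn w Set.univ x}

/-- The conditional probability that `x` is the greedy maximum of `P`, given `W x ≤ t`,
when the weights are independent and uniform on `[0,1]`. -/
noncomputable def muGreedyCond (P : Type) [Fintype P] [PartialOrder P] (t : ℝ) (x : P) : ℝ≥0∞ :=
  (Measure.pi fun _ : P => volume.restrict (Set.Icc (0:ℝ) 1))
      {w | IsGreedyMaxOn w Set.univ x ∧ w x ≤ t} /
    (Measure.pi fun _ : P => volume.restrict (Set.Icc (0:ℝ) 1)) {w | w x ≤ t}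

section Aux
variable {α : Type*}

lemma argminOn_mem (w : α → ℝ) (s : Finset α) (h : s.Nonempty) : argminOn w s h ∈ s :=
  (s.exists_min_image w h).choose_spec.1

lemma argminOn_le (w : α → ℝ) (s : Finset α) (h : s.Nonempty) {y : α} (hy : y ∈ s) :
    w (argminOn w s h) ≤ w y :=
  (s.exists_min_image w h).choose_spec.2 y hy

lemma argminOn_eq {w : α → ℝ} (hw : Function.Injective w) {s : Finset α} (h : s.Nonempty)
    {a : α} (ha : a ∈ s) (hmin : ∀ y ∈ s, w a ≤ w y) : argminOn w s h = a :=
  hw (le_antisymm (argminOn_le w s h ha) (hmin _ (argminOn_mem w s h)))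

variable [PartialOrder α] [Fintype α]

lemma le_greedyStep (w : α → ℝ) (z : α) : z ≤ greedyStep w z := by
  unfold greedyStep
  split_ifs with h
  · exact le_of_lt (Finset.mem_filter.mp (argminOn_mem w _ h)).2
  · exact le_refl _

lemma lt_greedyStep_of_ne (w : α → ℝ) {z : α} (h : greedyStep w z ≠ z) : z < greedyStep w z :=
  lt_of_le_of_ne (le_greedyStep w z) (Ne.symm h)

lemma greedyStep_of_isMax (w : α → ℝ) {z : α} (hz : IsMax z) : greedyStep w z = z := by
  have hne : ¬ (Finset.univ.filter fun y => z < y).Nonempty := by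
    rintro ⟨y, hy⟩
    exact hz.not_lt (Finset.mem_filter.mp hy).2
  simp [greedyStep, hne]

lemma greedyStep_min (w : α → ℝ) {z : α} (hz : ∀ y, z < y → w z ≤ w y) :
    ∀ y, greedyStep w z < y → w (greedyStep w z) ≤ w y := by
  intro y hy
  unfold greedyStep at *
  split_ifs at * with h
  · refine argminOn_le w _ h ?_
    have hz' : z < argminOn w _ h := (Finset.mem_filter.mp (argminOn_mem w _ h)).2
    simp only [Finset.mem_filter, Finset.mem_univ, true_and]
    exact hz'.trans hy
  · exact hz y hy

lemma w_le_greedyStep (w : α → ℝ) {z : α} (hz : ∀ y, z < y → w z ≤ w y) :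
    w z ≤ w (greedyStep w z) := by
  rcases eq_or_ne (greedyStep w z) z with h | h
  · rw [h]
  · exact hz _ (lt_greedyStep_of_ne w h)

lemma greedyStep_iterate_card (w : α → ℝ) (z : α) :
    greedyStep w ((greedyStep w)^[Fintype.card α] z) = (greedyStep w)^[Fintype.card α] z := by
  by_contra hne
  have key : ∀ i ≤ Fintype.card α, greedyStep w ((greedyStep w)^[i] z) ≠ (greedyStep w)^[i] z := by
    intro i hi hfix
    apply hne
    have h2 : (greedyStep w)^[Fintype.card α] z = (greedyStep w)^[i] z := by
      calc (greedyStep w)^[Fintype.card α] z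
          = (greedyStep w)^[Fintype.card α - i] ((greedyStep w)^[i] z) := by
            rw [← Function.iterate_add_apply]; congr 1; omega
        _ = (greedyStep w)^[i] z := Function.iterate_fixed hfix _
    rw [h2]; exact hfix
  set f : Fin (Fintype.card α + 1) → α := fun i => (greedyStep w)^[(i : ℕ)] z with hf
  have hmono : StrictMono f := by
    rw [Fin.strictMono_iff_lt_succ]
    intro i
    have : f i.succ = greedyStep w (f i.castSucc) := by
      simp only [hf, Fin.val_succ, Fin.coe_castSucc, Function.iterate_succ_apply']
    rw [this]
    exact lt_greedyStep_of_ne w (key i (le_of_lt i.isLt))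
  have := Fintype.card_le_of_injective f hmono.injective
  simp at this

end Aux

section Aux2
variable {α : Type*}

lemma iterate_fixed_of_le {f : α → α} {z : α} {m n : ℕ} (h : m ≤ n)
    (hfix : f (f^[m] z) = f^[m] z) : f^[n] z = f^[m] z := by
  conv_lhs => rw [show n = (n - m) + m by omega, Function.iterate_add_apply]
  exact Function.iterate_fixed hfix _

variable [PartialOrder α] [Fintype α]

lemma greedyStep_coe {w : α → ℝ} (hw : Function.Injective w) {S : Set α} {x : α}
    (hS : ∀ y, y ∈ S ↔ w y ≤ w x) (z : S) (hstep : w (greedyStep w z.1) ≤ w x) :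
    (greedyStep (fun y : S => w y.1) z).1 = greedyStep w z.1 := by
  by_cases h : (Finset.univ.filter fun y => z.1 < y).Nonempty
  · have hga : greedyStep w z.1 = argminOn w _ h := dif_pos h
    set a := argminOn w _ h with ha
    have haS : a ∈ S := (hS a).2 (by rw [← hga]; exact hstep)
    have haF : z.1 < a := (Finset.mem_filter.mp (argminOn_mem w _ h)).2
    have h' : ((Finset.univ : Finset S).filter fun y => z < y).Nonempty :=
      ⟨⟨a, haS⟩, Finset.mem_filter.mpr ⟨Finset.mem_univ _, Subtype.coe_lt_coe.mp haF⟩⟩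
    have hstep' : greedyStep (fun y : S => w y.1) z = argminOn _ _ h' := dif_pos h'
    rw [hstep', hga]
    have : argminOn (fun y : S => w y.1) _ h' = ⟨a, haS⟩ := by
      apply argminOn_eq (fun u v huv => Subtype.ext (hw huv)) h'
        (Finset.mem_filter.mpr ⟨Finset.mem_univ _, Subtype.coe_lt_coe.mp haF⟩)
      intro y hy
      have : z.1 < y.1 := Subtype.coe_lt_coe.mpr (Finset.mem_filter.mp hy).2
      exact argminOn_le w _ h (Finset.mem_filter.mpr ⟨Finset.mem_univ _, this⟩)
    rw [this]
  · have h' : ¬ ((Finset.univ : Finset S).filter fun y => z < y).Nonempty := by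
      rintro ⟨y, hy⟩
      exact h ⟨y.1, Finset.mem_filter.mpr ⟨Finset.mem_univ _,
        Subtype.coe_lt_coe.mpr (Finset.mem_filter.mp hy).2⟩⟩
    have h1 : greedyStep (fun y : S => w y.1) z = z := dif_neg h'
    have h2 : greedyStep w z.1 = z.1 := dif_neg h
    rw [h1, h2]

lemma greedyStep_coe_fix {w : α → ℝ} {S : Set α} {x : α}
    (hS : ∀ y, y ∈ S ↔ w y ≤ w x) (z : S) (hstep : ¬ w (greedyStep w z.1) ≤ w x) :
    greedyStep (fun y : S => w y.1) z = z := by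
  have h : (Finset.univ.filter fun y => z.1 < y).Nonempty := by
    by_contra hne
    rw [show greedyStep w z.1 = z.1 from dif_neg hne] at hstep
    exact hstep ((hS _).mp z.2)
  have hga : greedyStep w z.1 = argminOn w _ h := dif_pos h
  have h' : ¬ ((Finset.univ : Finset S).filter fun y => z < y).Nonempty := by
    rintro ⟨y, hy⟩
    apply hstep
    rw [hga]
    calc w (argminOn w _ h) ≤ w y.1 := argminOn_le w _ h (Finset.mem_filter.mpr
          ⟨Finset.mem_univ _, Subtype.coe_lt_coe.mpr (Finset.mem_filter.mp hy).2⟩)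
      _ ≤ w x := (hS _).mp y.2
  exact dif_neg h'

end Aux2

/-- For a maximal element `x`, `x` is the greedy maximum of `(P, w)` iff
`x` is the greedy maximum of the induced partial order on the elements of weight at most
`w x`, with the restricted weights. -/
theorem greedy_max_iff_greedy_max_below (P : Type) [Fintype P] [PartialOrder P] [Nonempty P]
    (w : P → ℝ) (hw : Function.Injective w) (x : P) (hx : IsMax x) :
    greedyMax w = x ↔ IsGreedyMaxOn w {y | w y ≤ w x} x := by
  classical
  have hxS : x ∈ {y | w y ≤ w x} := le_refl (w x)
  haveI : Nonempty ↥{y : P | w y ≤ w x} := ⟨⟨x, hxS⟩⟩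
  set S : Set P := {y | w y ≤ w x} with hSdef
  have hS : ∀ y, y ∈ S ↔ w y ≤ w x := fun y => Iff.rfl
  set ws : S → ℝ := fun y => w y.1 with hwsdef
  have hws_inj : Function.Injective ws := fun a b h => Subtype.ext (hw h)
  set c : ℕ → P := fun n => (greedyStep w)^[n] (argminOn w Finset.univ Finset.univ_nonempty)
    with hcdef
  set d : ℕ → ↥S := fun n => (greedyStep ws)^[n] (argminOn ws Finset.univ Finset.univ_nonempty)
    with hddef
  have hcsucc : ∀ n, c (n + 1) = greedyStep w (c n) := fun n =>
    Function.iterate_succ_apply' _ n _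
  have hdsucc : ∀ n, d (n + 1) = greedyStep ws (d n) := fun n =>
    Function.iterate_succ_apply' _ n _
  have hmin : ∀ n, ∀ y, c n < y → w (c n) ≤ w y := by
    intro n
    induction n with
    | zero => exact fun y _ => argminOn_le w _ _ (Finset.mem_univ y)
    | succ n ih => rw [hcsucc n]; exact greedyStep_min w ih
  have hwc : Monotone fun n => w (c n) := by
    apply monotone_nat_of_le_succ
    intro n; rw [hcsucc n]; exact w_le_greedyStep w (hmin n)
  have hc0S : c 0 ∈ S := (hS _).2 (argminOn_le w _ _ (Finset.mem_univ x))
  have hd0 : (d 0).1 = c 0 := by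
    have h0 : d 0 = ⟨c 0, hc0S⟩ := by
      refine argminOn_eq hws_inj Finset.univ_nonempty (Finset.mem_univ _) ?_
      intro y _
      exact argminOn_le w Finset.univ Finset.univ_nonempty (Finset.mem_univ y.1)
    rw [h0]
  have hgM : greedyMax w = c (Fintype.card P) := rfl
  have hgMS : greedyMax ws = d (Fintype.card ↥S) := rfl
  have hMN : Fintype.card ↥S ≤ Fintype.card P :=
    Fintype.card_le_of_injective _ Subtype.val_injective
  have hiter : ∀ {m n : ℕ}, m ≤ n → greedyStep ws (d m) = d m → d n = d m := by
    intro m n hmn hfix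
    exact iterate_fixed_of_le hmn hfix
  constructor
  · intro hgm
    have hcx : c (Fintype.card P) = x := hgm
    have hbelow : ∀ n ≤ Fintype.card P, w (c n) ≤ w x := by
      intro n hn
      have h2 : w (c n) ≤ w (c (Fintype.card P)) := hwc hn
      rwa [hcx] at h2
    have hcoe : ∀ n ≤ Fintype.card P, (d n).1 = c n := by
      intro n
      induction n with
      | zero => exact fun _ => hd0
      | succ n ih =>
        intro hn
        have h1 := ih (Nat.le_of_succ_le hn)
        rw [hdsucc n, hcsucc n, ← h1]
        exact greedyStep_coe hw hS (d n)
          (by rw [h1, ← hcsucc n]; exact hbelow _ hn)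
    have hfix : greedyStep ws (d (Fintype.card ↥S)) = d (Fintype.card ↥S) :=
      greedyStep_iterate_card ws _
    have hdd : d (Fintype.card P) = d (Fintype.card ↥S) := hiter hMN hfix
    refine ⟨hxS, ?_⟩
    have : d (Fintype.card ↥S) = ⟨x, hxS⟩ := by
      rw [← hdd]
      exact Subtype.ext (by rw [hcoe _ le_rfl, hcx])
    exact this
  · rintro ⟨hx', hgm⟩
    have hdM : d (Fintype.card ↥S) = ⟨x, hx'⟩ := hgm
    have hcoe : ∀ n ≤ Fintype.card ↥S, (d n).1 = c n := by
      intro n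
      induction n with
      | zero => exact fun _ => hd0
      | succ n ih =>
        intro hn
        have h1 := ih (Nat.le_of_succ_le hn)
        by_cases hb : w (greedyStep w (c n)) ≤ w x
        · rw [hdsucc n, hcsucc n, ← h1]
          exact greedyStep_coe hw hS (d n) (by rw [h1]; exact hb)
        · exfalso
          have hfixn : greedyStep ws (d n) = d n :=
            greedyStep_coe_fix hS (d n) (by rw [h1]; exact hb)
          have hdMn : d (Fintype.card ↥S) = d n := hiter (Nat.le_of_succ_le hn) hfixn
          have hcnx : c n = x := by rw [← h1, ← hdMn, hdM]
          apply hb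
          rw [hcnx, greedyStep_of_isMax w hx]
    have hcM : c (Fintype.card ↥S) = x := by rw [← hcoe _ le_rfl, hdM]
    have hfixx : greedyStep w (c (Fintype.card ↥S)) = c (Fintype.card ↥S) := by
      rw [hcM]; exact greedyStep_of_isMax w hx
    rw [hgM]
    have hfin : c (Fintype.card P) = c (Fintype.card ↥S) := iterate_fixed_of_le hMN hfixx
    rw [hfin]
    exact hcM
end

section
/- Consider a finite nonempty partially ordered set P. Let the arrival times T : P → [0,1] and the weights W : P → [0,1] be random, with all 2|P| coordinates independent and uniformly distributed on [0,1]. Call an element x of P 'tagged' if x is the greedy maximum, with respect to W, of the induced partial order on {y ∈ P : T(y) ≤ T(x)}. Then for every t with 1/e < t ≤ 1, the probability that no element of P is tagged with arrival time in the interval (1/e, t] is at least 1/(e·t). -/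
open MeasureTheory Finset Function
open scoped Classical ENNReal

/-!
Fix the weights: already the randomness of the arrival times gives the bound, in the stronger
form that for `0 ≤ s ≤ t ≤ M ≤ 1`, with probability at least `(s / t) M ^ #R` all elements of
`R` arrive before `M` and none is tagged (within `R`) at a time in `(s, t]`. This goes by
induction on `#R`, conditioning on the element `x` that arrives last, at time `r`: it is tagged
exactly when it is the greedy maximum of `R`, and the earlier arrivals are tagged exactly as in
`R.erase x`, where only tags in `(s, t] ∩ [0, r)` matter. Integrating the inductive bound over
`r`, the greedy maximum contributes `∫₀ˢ rᵏ + ∫ₜᴹ (s / t) rᵏ` and each of the `k` other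
elements additionally `∫ₛᵗ s rᵏ⁻¹`, which adds up to `(s / t) M ^ (k + 1)`.
-/

def SameOrder {ι β : Type*} [LE β] (f g : ι → β) : Prop :=
  ∀ a b, f a ≤ f b ↔ g a ≤ g b

section SameOrder

variable {α : Type*} {w w' : α → ℝ}

theorem argminOn_congr (h : SameOrder w w') (s : Finset α) (hs hs' : s.Nonempty) :
    argminOn w s hs = argminOn w' s hs' := by
  unfold _root_.argminOn
  congr 1
  simp only [h _ _]

theorem greedyStep_congr [PartialOrder α] [Fintype α] (h : SameOrder w w') :
    greedyStep w = greedyStep w' := by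
  ext x
  unfold greedyStep
  split
  · exact argminOn_congr h _ _ _
  · rfl

theorem greedyMax_congr [PartialOrder α] [Fintype α] [Nonempty α] (h : SameOrder w w') :
    greedyMax w = greedyMax w' := by
  unfold greedyMax
  rw [greedyStep_congr h, argminOn_congr h]

theorem isGreedyMaxOn_congr [PartialOrder α] [Fintype α] (h : SameOrder w w') (s : Set α)
    (x : α) : IsGreedyMaxOn w s x ↔ IsGreedyMaxOn w' s x := by
  have hs : ∀ [Nonempty s], greedyMax (fun y : s => w y) = greedyMax (fun y : s => w' y) :=
    greedyMax_congr fun a b => h a b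
  exact exists_congr fun hx => by rw [@hs ⟨⟨x, hx⟩⟩]

theorem measurable_of_sameOrder_invariant {ι : Type*} [Finite ι] {p : (ι → ℝ) → Prop}
    (hp : ∀ f g, SameOrder f g → p f → p g) : Measurable p := by
  have key : p = fun g => ∃ ρ : ι → ι → Prop, (∃ f, p f ∧ ∀ a b, f a ≤ f b ↔ ρ a b) ∧
      ∀ a b, g a ≤ g b ↔ ρ a b := by
    ext g
    refine ⟨fun hg => ⟨fun a b => g a ≤ g b, ⟨g, hg, fun _ _ => Iff.rfl⟩, fun _ _ => Iff.rfl⟩,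
      fun ⟨ρ, ⟨f, hf, hfρ⟩, hgρ⟩ => hp f g (fun a b => (hfρ a b).trans (hgρ a b).symm) hf⟩
  rw [key]
  refine Measurable.exists fun ρ => measurable_const.and ?_
  refine Measurable.forall fun a => Measurable.forall fun b => ?_
  exact (measurableSet_le (measurable_pi_apply a) (measurable_pi_apply b)).mem.iff
    measurable_const

end SameOrder

section Tagging

variable {α : Type*} [PartialOrder α] [Fintype α] {w : α → ℝ}

theorem IsGreedyMaxOn.mem {s : Set α} {x : α} (h : IsGreedyMaxOn w s x) : x ∈ s := h.1

theorem IsGreedyMaxOn.unique {s : Set α} {x x' : α} (h : IsGreedyMaxOn w s x)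
    (h' : IsGreedyMaxOn w s x') : x = x' :=
  congrArg Subtype.val (h.2.symm.trans h'.2)

theorem exists_isGreedyMaxOn (w : α → ℝ) {s : Set α} (hs : s.Nonempty) :
    ∃ x, IsGreedyMaxOn w s x :=
  haveI : Nonempty s := hs.to_subtype
  ⟨(greedyMax fun y : s => w y).1, (greedyMax fun y : s => w y).2, rfl⟩

theorem Tagged.congr {T T' w' : α → ℝ} (hT : SameOrder T T') (hw : SameOrder w w') {x : α} :
    Tagged T w x ↔ Tagged T' w' x := by
  unfold Tagged
  simp only [hT _ x]
  exact isGreedyMaxOn_congr hw _ x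

@[fun_prop]
theorem measurable_tagged_sum (x : α) :
    Measurable fun ω : α ⊕ α → ℝ => Tagged (fun y => ω (.inl y)) (fun y => ω (.inr y)) x :=
  measurable_of_sameOrder_invariant fun _ _ h =>
    (Tagged.congr (fun a b => h (.inl a) (.inl b)) (fun a b => h (.inr a) (.inr b))).1

def TaggedWithin (w : α → ℝ) (R : Finset α) (T : α → ℝ) (x : α) : Prop :=
  IsGreedyMaxOn w {y | y ∈ R ∧ T y ≤ T x} x

theorem taggedWithin_univ {T : α → ℝ} {x : α} : TaggedWithin w univ T x ↔ Tagged T w x := by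
  simp only [TaggedWithin, Tagged, mem_univ, true_and]

@[fun_prop]
theorem measurable_taggedWithin (w : α → ℝ) (R : Finset α) (x : α) :
    Measurable fun T => TaggedWithin w R T x :=
  measurable_of_sameOrder_invariant fun T T' h hT => by
    simpa only [TaggedWithin, h _ x] using hT

def noTagSet (w : α → ℝ) (R : Finset α) (s t M : ℝ) : Set (α → ℝ) :=
  {T | (∀ y ∈ R, T y < M) ∧ ∀ x ∈ R, TaggedWithin w R T x → T x ∉ Set.Ioc s t}

/-- The part of `noTagSet w R s t M` on which `x` arrives last. -/
def noTagSetLast (w : α → ℝ) (R : Finset α) (s t M : ℝ) (x : α) : Set (α → ℝ) :=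
  {T | T x < M ∧ (IsGreedyMaxOn w R x → T x ∉ Set.Ioc s t) ∧
    T ∈ noTagSet w (R.erase x) s t (T x)}

theorem measurableSet_noTagSet (w : α → ℝ) (R : Finset α) (s t M : ℝ) :
    MeasurableSet (noTagSet w R s t M) := by
  refine measurableSet_setOfPred.2 ?_
  fun_prop (disch := exact measurableSet_Ioc)

theorem measurableSet_noTagSetLast (w : α → ℝ) (R : Finset α) (s t M : ℝ) (x : α) :
    MeasurableSet (noTagSetLast w R s t M x) := by
  simp only [noTagSetLast, noTagSet, Set.mem_ofPred_eq, measurableSet_setOfPred]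
  fun_prop (disch := exact measurableSet_Ioc)

variable {R : Finset α} {s t M : ℝ}

theorem noTagSet_mono {s' t' : ℝ} (h : Set.Ioc s t ∩ Set.Iio M ⊆ Set.Ioc s' t') :
    noTagSet w R s' t' M ⊆ noTagSet w R s t M :=
  fun _ ⟨hM, hT⟩ => ⟨hM, fun x hx htag hst => hT x hx htag (h ⟨hst, hM x hx⟩)⟩

theorem noTagSetLast_subset {x : α} (hx : x ∈ R) :
    noTagSetLast w R s t M x ⊆ noTagSet w R s t M := by
  rintro T ⟨hxM, hgreedy, hlast, hnotag⟩
  refine ⟨fun y hy => ?_, fun z hz htag => ?_⟩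
  · rcases eq_or_ne y x with rfl | hyx
    · exact hxM
    · exact (hlast y (mem_erase.2 ⟨hyx, hy⟩)).trans hxM
  rcases eq_or_ne z x with rfl | hzx
  · -- the last arrival sees all of `R`
    have hall : {y | y ∈ R ∧ T y ≤ T z} = R := by
      ext y
      rcases eq_or_ne y z with rfl | hyz
      · simp [hx]
      · simpa using fun hy => (hlast y (mem_erase.2 ⟨hyz, hy⟩)).le
    exact hgreedy (by rwa [TaggedWithin, hall] at htag)
  · -- earlier arrivals do not see `x`
    have hz' : z ∈ R.erase x := mem_erase.2 ⟨hzx, hz⟩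
    have hsee : {y | y ∈ R ∧ T y ≤ T z} = {y | y ∈ R.erase x ∧ T y ≤ T z} := by
      ext y
      simp only [Set.mem_ofPred_eq, mem_erase, and_assoc]
      refine ⟨fun ⟨hy, hyz⟩ => ⟨?_, hy, hyz⟩, fun ⟨_, hy, hyz⟩ => ⟨hy, hyz⟩⟩
      rintro rfl
      exact (hyz.trans_lt (hlast z hz')).false
    exact hnotag z hz' (by rwa [TaggedWithin, hsee] at htag)

theorem pairwiseDisjoint_noTagSetLast :
    (R : Set α).PairwiseDisjoint (noTagSetLast w R s t M) := by
  intro x hx x' hx' hne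
  refine Set.disjoint_left.2 fun T hT hT' => ?_
  have h₁ := hT.2.2.1 x' (mem_erase.2 ⟨hne.symm, hx'⟩)
  have h₂ := hT'.2.2.1 x (mem_erase.2 ⟨hne, hx⟩)
  exact (h₁.trans h₂).false

theorem mem_noTagSetLast {x : α} {T : α → ℝ} (hxM : T x < M)
    (hgreedy : IsGreedyMaxOn w R x → T x ∉ Set.Ioc s t)
    (hT : T ∈ noTagSet w (R.erase x) (min s (T x)) (min t (T x)) (T x)) :
    T ∈ noTagSetLast w R s t M x :=
  ⟨hxM, hgreedy, noTagSet_mono (fun _ ⟨⟨hsu, hut⟩, hu⟩ =>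
    ⟨(min_le_left _ _).trans_lt hsu, le_min hut hu.le⟩) hT⟩

end Tagging

section Marginal

variable {δ : Type*} {X : δ → Type*} [∀ i, MeasurableSpace (X i)] {μ : ∀ i, Measure (X i)}
  [DecidableEq δ] {s : Finset δ}

theorem lmarginal_finsetSum {ι : Type*} (R : Finset ι) {f : ι → (∀ i, X i) → ℝ≥0∞}
    (hf : ∀ k ∈ R, Measurable (f k)) :
    ∫⋯∫⁻_s, (∑ k ∈ R, f k) ∂μ = ∑ k ∈ R, ∫⋯∫⁻_s, f k ∂μ := by
  ext x
  simp only [lmarginal, Finset.sum_apply]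
  exact lintegral_finsetSum _ fun k hk => (hf k hk).comp measurable_updateFinset

theorem lmarginal_apply_mono {f g : (∀ i, X i) → ℝ≥0∞} {x : ∀ i, X i}
    (h : ∀ y, (∀ i ∉ s, y i = x i) → f y ≤ g y) :
    (∫⋯∫⁻_s, f ∂μ) x ≤ (∫⋯∫⁻_s, g ∂μ) x :=
  lintegral_mono fun _ => h _ fun i hi => by simp [Function.updateFinset_def, hi]

end Marginal

theorem le_measure_pi_sum_of_forall_le {ι ι' β : Type*} [Fintype ι] [Fintype ι']
    [MeasurableSpace β] (μ : Measure β) [IsProbabilityMeasure μ] {S : Set (ι ⊕ ι' → β)}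
    (hS : MeasurableSet S) {c : ℝ≥0∞}
    (h : ∀ W : ι' → β, c ≤ Measure.pi (fun _ : ι => μ) {T | Sum.elim T W ∈ S}) :
    c ≤ Measure.pi (fun _ => μ) S := by
  have e := measurePreserving_sumPiEquivProdPi_symm fun _ : ι ⊕ ι' => μ
  rw [← e.measure_preimage hS.nullMeasurableSet, Measure.prod_apply_symm (e.measurable hS)]
  calc c = ∫⁻ _, c ∂Measure.pi (fun _ : ι' => μ) := by simp
    _ ≤ _ := lintegral_mono fun W => h W

local notation "𝕌" => (volume.restrict (Set.Icc (0:ℝ) 1) : Measure ℝ)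

instance : IsProbabilityMeasure 𝕌 := ⟨by simp⟩

section Integrals

variable {F : ℝ → ℝ≥0∞} {s t M : ℝ} {k : ℕ}

theorem ofReal_intervalIntegral_le_setLIntegral {a b : ℝ} (ha : 0 ≤ a) (hab : a ≤ b)
    (hb : b ≤ 1) {f : ℝ → ℝ} (hf : Continuous f) (hf0 : ∀ r ∈ Set.Ioo a b, 0 ≤ f r)
    (hfF : ∀ r ∈ Set.Ioo a b, ENNReal.ofReal (f r) ≤ F r) :
    ENNReal.ofReal (∫ r in a..b, f r) ≤ ∫⁻ r in Set.Ioo a b, F r ∂𝕌 := calc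
  ENNReal.ofReal (∫ r in a..b, f r) = ∫⁻ r in Set.Ioo a b, ENNReal.ofReal (f r) := by
    rw [intervalIntegral.integral_of_le hab, integral_Ioc_eq_integral_Ioo,
      ofReal_integral_eq_lintegral_ofReal (hf.integrableOn_Icc.mono_set Set.Ioo_subset_Icc_self)
        ((ae_restrict_iff' measurableSet_Ioo).2 (ae_of_all _ hf0))]
  _ ≤ ∫⁻ r in Set.Ioo a b, F r := setLIntegral_mono' measurableSet_Ioo hfF
  _ = ∫⁻ r in Set.Ioo a b, F r ∂𝕌 := by
    rw [Measure.restrict_restrict measurableSet_Ioo, Set.inter_eq_left.2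
      (Set.Ioo_subset_Icc_self.trans (Set.Icc_subset_Icc ha hb))]

theorem intervalIntegral_pow_nonneg {a b : ℝ} (ha : 0 ≤ a) (hab : a ≤ b) (n : ℕ) :
    0 ≤ ∫ r in a..b, r ^ n :=
  intervalIntegral.integral_nonneg hab fun _ hr => pow_nonneg (ha.trans hr.1) n

theorem ofReal_integrals_le_setLIntegral_compl_Ioc (hs : 0 ≤ s) (hst : s ≤ t) (htM : t ≤ M)
    (hM : M ≤ 1)
    (hF : ∀ r ∈ Set.Ico 0 M, r ∉ Set.Ioc s t → ENNReal.ofReal (min s r / min t r * r ^ k) ≤ F r) :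
    ENNReal.ofReal ((∫ r in (0)..s, r ^ k) + ∫ r in t..M, s / t * r ^ k) ≤
      ∫⁻ r in (Set.Ioc s t)ᶜ, F r ∂𝕌 := by
  have ht : 0 ≤ t := hs.trans hst
  calc ENNReal.ofReal ((∫ r in (0)..s, r ^ k) + ∫ r in t..M, s / t * r ^ k)
      = ENNReal.ofReal (∫ r in (0)..s, r ^ k) + ENNReal.ofReal (∫ r in t..M, s / t * r ^ k) :=
        ENNReal.ofReal_add (intervalIntegral_pow_nonneg le_rfl hs k) (by
          rw [intervalIntegral.integral_const_mul]
          exact mul_nonneg (div_nonneg hs ht) (intervalIntegral_pow_nonneg ht htM k))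
    _ ≤ ∫⁻ r in Set.Ioo 0 s, F r ∂𝕌 + ∫⁻ r in Set.Ioo t M, F r ∂𝕌 := by
        gcongr
        · refine ofReal_intervalIntegral_le_setLIntegral le_rfl hs (hst.trans (htM.trans hM))
            (by fun_prop) (fun r hr => pow_nonneg hr.1.le k) fun r hr => ?_
          have hrs : r < s := hr.2
          convert hF r ⟨hr.1.le, hrs.trans_le (hst.trans htM)⟩ fun h => (h.1.trans hrs).false
            using 2
          rw [min_eq_right hrs.le, min_eq_right (hrs.trans_le hst).le, div_self hr.1.ne', one_mul]
        · refine ofReal_intervalIntegral_le_setLIntegral ht htM hM (by fun_prop)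
            (fun r hr => mul_nonneg (div_nonneg hs ht) (pow_nonneg (ht.trans hr.1.le) k))
            fun r hr => ?_
          convert hF r ⟨ht.trans hr.1.le, hr.2⟩ fun h => (h.2.trans_lt hr.1).false using 2
          rw [min_eq_left (hst.trans hr.1.le), min_eq_left hr.1.le]
    _ = ∫⁻ r in Set.Ioo 0 s ∪ Set.Ioo t M, F r ∂𝕌 :=
        (lintegral_union measurableSet_Ioo (Set.disjoint_left.2 fun r h₁ h₂ =>
          (h₁.2.trans_le (hst.trans h₂.1.le)).false)).symm
    _ ≤ ∫⁻ r in (Set.Ioc s t)ᶜ, F r ∂𝕌 := lintegral_mono_set fun _ hr h => by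
        rcases hr with hr | hr
        exacts [(hr.2.trans h.1).false, (h.2.trans_lt hr.1).false]

theorem ofReal_integral_le_setLIntegral_Ioc (hs : 0 ≤ s) (hst : s ≤ t) (htM : t ≤ M)
    (hM : M ≤ 1) (hk : k ≠ 0)
    (hF : ∀ r ∈ Set.Ico 0 M, ENNReal.ofReal (min s r / min t r * r ^ k) ≤ F r) :
    ENNReal.ofReal (∫ r in s..t, s * r ^ (k - 1)) ≤ ∫⁻ r in Set.Ioc s t, F r ∂𝕌 := by
  obtain ⟨j, rfl⟩ := Nat.exists_eq_add_one_of_ne_zero hk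
  refine (ofReal_intervalIntegral_le_setLIntegral hs hst (htM.trans hM) (by fun_prop)
    (fun r hr => mul_nonneg hs (pow_nonneg (hs.trans hr.1.le) _)) fun r hr => ?_).trans
    (lintegral_mono_set Set.Ioo_subset_Ioc_self)
  have hr0 : 0 < r := hs.trans_lt hr.1
  convert hF r ⟨hr0.le, hr.2.trans_le htM⟩ using 2
  rw [min_eq_left hr.1.le, min_eq_right hr.2.le, Nat.add_sub_cancel, pow_succ]
  field_simp

theorem integrals_eq_div_mul_pow_succ (hs : 0 ≤ s) (hst : s ≤ t) (M : ℝ) (k : ℕ) :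
    (∫ r in (0)..s, r ^ k) + (∫ r in t..M, s / t * r ^ k) +
      k * ((∫ r in (0)..s, r ^ k) + (∫ r in t..M, s / t * r ^ k) +
        ∫ r in s..t, s * r ^ (k - 1)) = s / t * M ^ (k + 1) := by
  simp only [intervalIntegral.integral_const_mul, integral_pow]
  rcases (hs.trans hst).eq_or_lt with rfl | ht
  · obtain rfl : s = 0 := le_antisymm hst hs
    simp
  rcases k with _ | k
  · field_simp
    ring
  · push_cast
    field_simp
    ring

end Integrals

section Induction

variable {α : Type*} [PartialOrder α] [Fintype α] (w : α → ℝ) {R : Finset α} {s t M : ℝ}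

theorem sum_lmarginal_noTagSetLast_le (T : α → ℝ) :
    ∑ x ∈ R, (∫⋯∫⁻_R, (noTagSetLast w R s t M x).indicator 1 ∂fun _ => 𝕌) T ≤
      (∫⋯∫⁻_R, (noTagSet w R s t M).indicator 1 ∂fun _ => 𝕌) T := by
  rw [← Finset.sum_apply, ← lmarginal_finsetSum R fun x _ =>
    measurable_one.indicator (measurableSet_noTagSetLast w R s t M x)]
  refine lmarginal_mono (fun η => ?_) T
  rw [Finset.sum_apply, ← Finset.indicator_biUnion_apply _ _ pairwiseDisjoint_noTagSetLast]
  refine Set.indicator_le_indicator_of_subset ?_ (fun _ => zero_le) η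
  exact Set.iUnion₂_subset fun x hx => noTagSetLast_subset hx

/-- Once the last arrival `x` is fixed at time `r`, the earlier arrivals form an instance of the
same problem on `R.erase x` with horizon `r`, in which only tags in `(min s r, min t r]` matter. -/
theorem ofReal_le_lmarginal_noTagSetLast {k : ℕ} {x : α}
    (ih : ∀ {s t M : ℝ}, 0 ≤ s → s ≤ t → t ≤ M → M ≤ 1 → ∀ T : α → ℝ,
      ENNReal.ofReal (s / t * M ^ k) ≤
        (∫⋯∫⁻_(R.erase x), (noTagSet w (R.erase x) s t M).indicator 1 ∂fun _ => 𝕌) T)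
    (hs : 0 ≤ s) (hst : s ≤ t) (hM : M ≤ 1) {r : ℝ} (hr : r ∈ Set.Ico 0 M)
    (hgreedy : IsGreedyMaxOn w R x → r ∉ Set.Ioc s t) (T : α → ℝ) :
    ENNReal.ofReal (min s r / min t r * r ^ k) ≤
      (∫⋯∫⁻_(R.erase x), (noTagSetLast w R s t M x).indicator 1 ∂fun _ => 𝕌)
        (Function.update T x r) := by
  refine (ih (le_min hs hr.1) (min_le_min_right r hst) (min_le_right t r) (hr.2.le.trans hM)
    _).trans (lmarginal_apply_mono fun η hη => ?_)
  obtain rfl : η x = r := by simpa using hη x (notMem_erase x R)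
  refine Set.indicator_apply_le' (fun hη => (Set.indicator_of_mem ?_ _).ge) fun _ => zero_le
  exact mem_noTagSetLast hr.2 hgreedy hη

theorem ofReal_le_lmarginal_noTagSet_of_erase {k : ℕ} (hR : #R = k + 1)
    (ih : ∀ x ∈ R, ∀ {s t M : ℝ}, 0 ≤ s → s ≤ t → t ≤ M → M ≤ 1 → ∀ T : α → ℝ,
      ENNReal.ofReal (s / t * M ^ k) ≤
        (∫⋯∫⁻_(R.erase x), (noTagSet w (R.erase x) s t M).indicator 1 ∂fun _ => 𝕌) T)
    (hs : 0 ≤ s) (hst : s ≤ t) (htM : t ≤ M) (hM : M ≤ 1) (T : α → ℝ) :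
    ENNReal.ofReal (s / t * M ^ (k + 1)) ≤
      (∫⋯∫⁻_R, (noTagSet w R s t M).indicator 1 ∂fun _ => 𝕌) T := by
  obtain ⟨x₀, hx₀⟩ := exists_isGreedyMaxOn w (s := (R : Set α))
    (by simp [← Finset.card_pos, hR])
  set last : α → ℝ≥0∞ := fun x =>
    (∫⋯∫⁻_R, (noTagSetLast w R s t M x).indicator 1 ∂fun _ => 𝕌) T
  have hlast : ∀ x ∈ R, last x = ∫⁻ r, (∫⋯∫⁻_(R.erase x),
      (noTagSetLast w R s t M x).indicator 1 ∂fun _ => 𝕌) (Function.update T x r) ∂𝕌 :=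
    fun x hx => lmarginal_erase _
      (measurable_one.indicator (measurableSet_noTagSetLast w R s t M x)) hx T
  set a := (∫ r in (0)..s, r ^ k) + ∫ r in t..M, s / t * r ^ k
  set b := ∫ r in s..t, s * r ^ (k - 1)
  have ha0 : 0 ≤ a := add_nonneg
    (intervalIntegral.integral_nonneg hs fun r hr => pow_nonneg hr.1 k)
    (intervalIntegral.integral_nonneg htM fun r hr =>
      mul_nonneg (div_nonneg hs (hs.trans hst)) (pow_nonneg ((hs.trans hst).trans hr.1) k))
  have hb0 : 0 ≤ b := intervalIntegral.integral_nonneg hst fun r hr =>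
    mul_nonneg hs (pow_nonneg (hs.trans hr.1) _)
  -- every `x` contributes `a`; one other than the greedy maximum is never tagged when last,
  -- so it contributes `b` as well
  have ha : ∀ x ∈ R, ENNReal.ofReal a ≤ last x := fun x hx => by
    rw [hlast x hx]
    exact (ofReal_integrals_le_setLIntegral_compl_Ioc hs hst htM hM fun r hr hrst =>
      ofReal_le_lmarginal_noTagSetLast w (ih x hx) hs hst hM hr (fun _ => hrst) T).trans
      (setLIntegral_le_lintegral _ _)
  have hab : ∀ x ∈ R.erase x₀, ENNReal.ofReal (a + b) ≤ last x := fun x hx => by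
    obtain ⟨hne, hx⟩ := mem_erase.1 hx
    have hk : k ≠ 0 := by
      have := Finset.one_lt_card.2 ⟨x₀, hx₀.mem, x, hx, Ne.symm hne⟩
      omega
    have hF := fun r (hr : r ∈ Set.Ico 0 M) => ofReal_le_lmarginal_noTagSetLast w (ih x hx)
      hs hst hM hr (fun h => (hne (h.unique hx₀)).elim) T
    rw [hlast x hx, ← lintegral_add_compl _ measurableSet_Ioc, add_comm a,
      ENNReal.ofReal_add hb0 ha0]
    exact add_le_add (ofReal_integral_le_setLIntegral_Ioc hs hst htM hM hk hF)
      (ofReal_integrals_le_setLIntegral_compl_Ioc hs hst htM hM fun r hr _ => hF r hr)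
  have hcard : #(R.erase x₀) = k := by rw [card_erase_of_mem hx₀.mem, hR]; rfl
  calc ENNReal.ofReal (s / t * M ^ (k + 1))
      = ENNReal.ofReal a + k • ENNReal.ofReal (a + b) := by
        rw [← integrals_eq_div_mul_pow_succ hs hst M k, ENNReal.ofReal_add ha0 (by positivity),
          ← nsmul_eq_mul, ENNReal.ofReal_nsmul]
    _ ≤ last x₀ + ∑ x ∈ R.erase x₀, last x :=
        add_le_add (ha x₀ hx₀.mem) (hcard ▸ Finset.card_nsmul_le_sum _ _ _ hab)
    _ = ∑ x ∈ R, last x := add_sum_erase _ _ hx₀.mem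
    _ ≤ _ := sum_lmarginal_noTagSetLast_le w T

end Induction

section Main

variable {α : Type*} [PartialOrder α] [Fintype α] {s t M : ℝ}

theorem ofReal_le_lmarginal_noTagSet (w : α → ℝ) (R : Finset α) (hs : 0 ≤ s) (hst : s ≤ t)
    (htM : t ≤ M) (hM : M ≤ 1) (T : α → ℝ) :
    ENNReal.ofReal (s / t * M ^ #R) ≤
      (∫⋯∫⁻_R, (noTagSet w R s t M).indicator 1 ∂fun _ => 𝕌) T := by
  induction hR : #R generalizing R s t M T with
  | zero =>
    obtain rfl := card_eq_zero.1 hR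
    have hT : T ∈ noTagSet w ∅ s t M := ⟨by simp, by simp⟩
    simpa [hT] using div_le_one_of_le₀ hst (hs.trans hst)
  | succ k ih =>
    refine ofReal_le_lmarginal_noTagSet_of_erase w hR (fun x hx s t M hs hst htM hM T => ?_)
      hs hst htM hM T
    exact ih (R.erase x) hs hst htM hM T (by rw [card_erase_of_mem hx, hR]; rfl)

theorem ofReal_div_le_measure_noTag (w : α → ℝ) (hs : 0 ≤ s) (hst : s ≤ t) (ht : t ≤ 1) :
    ENNReal.ofReal (s / t) ≤
      Measure.pi (fun _ : α => 𝕌) {T | ∀ x, Tagged T w x → T x ∉ Set.Ioc s t} := calc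
  ENNReal.ofReal (s / t) = ENNReal.ofReal (s / t * 1 ^ #(univ : Finset α)) := by simp
  _ ≤ (∫⋯∫⁻_univ, (noTagSet w univ s t 1).indicator 1 ∂fun _ => 𝕌) 0 :=
    ofReal_le_lmarginal_noTagSet w univ hs hst ht le_rfl 0
  _ = Measure.pi (fun _ : α => 𝕌) (noTagSet w univ s t 1) := by
    rw [← lintegral_eq_lmarginal_univ, lintegral_indicator_one (measurableSet_noTagSet ..)]
  _ ≤ _ := measure_mono fun T hT x hx => hT.2 x (mem_univ x) (taggedWithin_univ.2 hx)

end Main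

theorem no_tag_in_interval_prob_general (P : Type) [Fintype P] [PartialOrder P]
    {t : ℝ} (ht0 : 1 / Real.exp 1 < t) (ht1 : t ≤ 1) :
    ENNReal.ofReal (1 / (Real.exp 1 * t)) ≤
      (Measure.pi fun _ : P ⊕ P => volume.restrict (Set.Icc (0:ℝ) 1))
        {ω | ∀ x : P,
          Tagged (fun y => ω (Sum.inl y)) (fun y => ω (Sum.inr y)) x →
            ¬(1 / Real.exp 1 < ω (Sum.inl x) ∧ ω (Sum.inl x) ≤ t)} := by
  refine le_measure_pi_sum_of_forall_le _ (measurableSet_setOfPred.2 (by fun_prop))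
    fun W => ?_
  rw [← div_div]
  exact ofReal_div_le_measure_noTag W (by positivity) ht0.le ht1

/-- For every `t` with `1/e < t ≤ 1`, the probability that no element is
tagged with arrival time in the interval `(1/e, t]` is at least `1/(e·t)`. -/
theorem no_tag_in_interval_prob (P : Type) [Fintype P] [PartialOrder P] [Nonempty P]
    {t : ℝ} (ht0 : 1 / Real.exp 1 < t) (ht1 : t ≤ 1) :
    ENNReal.ofReal (1 / (Real.exp 1 * t)) ≤
      (Measure.pi fun _ : P ⊕ P => volume.restrict (Set.Icc (0:ℝ) 1))
        {ω | ∀ x : P,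
          Tagged (fun y => ω (Sum.inl y)) (fun y => ω (Sum.inr y)) x →
            ¬(1 / Real.exp 1 < ω (Sum.inl x) ∧ ω (Sum.inl x) ≤ t)} :=
  no_tag_in_interval_prob_general P ht0 ht1
end
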